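/- arXiv:2310.07040 — 3 statements merged into one kernel-verified Lean document; each statement's English description precedes it below -/
import Mathlib

section
/- Let τ' > 3 be a real number, set α := 1/(τ'-1) and β := 1 - 1/(τ'-1), and define h_i := max(α·i - β, 0) for i ∈ ℕ. Let k ≥ 1 and let {B_1, ..., B_ℓ} be a partition of {1,...,k} into ℓ ≥ 2 nonempty blocks. Then h_ℓ + Σ_{j=1}^ℓ h_{|B_j|} ≤ h_k. -/
theorem stmt1 (τ : ℝ) (hτ : 3 < τ) (α β : ℝ) (hα : α = 1 / (τ - 1))
    (hβ : β = 1 - 1 / (τ - 1))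
    (h : ℕ → ℝ) (hh : ∀ i : ℕ, h i = max (α * i - β) 0)
    (k ℓ : ℕ) (hk : 1 ≤ k) (hℓ : 2 ≤ ℓ)
    (B : Fin ℓ → Finset (Fin k))
    (hdisj : Pairwise fun i j => Disjoint (B i) (B j))
    (hcover : Finset.univ.biUnion B = Finset.univ)
    (hne : ∀ j, (B j).Nonempty) :
    h ℓ + ∑ j, h (B j).card ≤ h k := by
  have hτ1 : (0:ℝ) < τ - 1 := by linarith
  have hα0 : 0 < α := by rw [hα]; positivity
  have hαβ : α < β := by
    rw [hα, hβ]
    have h2 : 1/(τ-1) < 1/2 := by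
      rw [div_lt_div_iff₀ hτ1 (by norm_num)]; linarith
    linarith
  have hβ0 : 0 < β := lt_trans hα0 hαβ
  -- sum of cards = k
  have hsum : ∑ j, (B j).card = k := by
    have hc := Finset.card_biUnion (s := Finset.univ) (t := B)
      (fun i _ j _ hij => hdisj hij)
    rw [hcover, Finset.card_univ, Fintype.card_fin] at hc
    exact hc.symm
  have hcard1 : ∀ j, 1 ≤ (B j).card := fun j => Finset.card_pos.mpr (hne j)
  have hcardk : ∀ j, (B j).card ≤ k := by
    intro j
    calc (B j).card ≤ ∑ i, (B i).card :=
          Finset.single_le_sum (f := fun i => (B i).card) (fun i _ => Nat.zero_le _) (Finset.mem_univ j)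
    _ = k := hsum
  have hℓk : ℓ ≤ k := by
    calc ℓ = ∑ _j : Fin ℓ, 1 := by simp
    _ ≤ ∑ j, (B j).card := Finset.sum_le_sum (fun j _ => hcard1 j)
    _ = k := hsum
  set S : Finset (Fin ℓ) := Finset.univ.filter (fun j => β < α * (B j).card) with hS
  -- rewrite the sum
  have hsplit : ∑ j, h (B j).card = ∑ j ∈ S, (α * (B j).card - β) := by
    rw [hS, Finset.sum_filter]
    apply Finset.sum_congr rfl
    intro j _
    rw [hh]
    rcases lt_or_ge β (α * (B j).card) with hb | hb
    · rw [if_pos hb, max_eq_left (by linarith)]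
    · rw [if_neg (not_lt.mpr hb), max_eq_right (by linarith)]
  rcases Nat.eq_zero_or_pos S.card with hs0 | hs1
  · -- S empty
    rw [Finset.card_eq_zero] at hs0
    rw [hsplit, hs0, Finset.sum_empty, add_zero, hh, hh]
    apply max_le_max _ le_rfl
    have : (ℓ:ℝ) ≤ (k:ℝ) := by exact_mod_cast hℓk
    nlinarith
  · -- S nonempty
    obtain ⟨j0, hj0⟩ := Finset.card_pos.mp hs1
    have hj0' : β < α * (B j0).card := (Finset.mem_filter.mp hj0).2
    have hkβ : β < α * k := by
      have : (↑(B j0).card : ℝ) ≤ (k:ℝ) := by exact_mod_cast hcardk j0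
      nlinarith
    have hhk : h k = α * k - β := by
      rw [hh, max_eq_left (by linarith)]
    -- bound the sum over S
    set A : ℝ := ∑ j ∈ S, ((B j).card : ℝ) with hA
    have hsS : S.card ≤ ℓ := by
      calc S.card ≤ (Finset.univ : Finset (Fin ℓ)).card := Finset.card_le_card (Finset.filter_subset _ _)
      _ = ℓ := by simp
    have hAle : A ≤ (k:ℝ) - (ℓ:ℝ) + (S.card : ℝ) := by
      have hsplit2 : A + ∑ j ∈ Sᶜ, ((B j).card : ℝ) = (k:ℝ) := by
        rw [hA, Finset.sum_add_sum_compl]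
        exact_mod_cast hsum
      have hC : ((Sᶜ : Finset (Fin ℓ)).card : ℝ) ≤ ∑ j ∈ Sᶜ, ((B j).card : ℝ) := by
        calc ((Sᶜ : Finset (Fin ℓ)).card : ℝ) = ∑ _j ∈ Sᶜ, (1:ℝ) := by simp
        _ ≤ _ := Finset.sum_le_sum (fun j _ => by exact_mod_cast hcard1 j)
      have hcompl : ((Sᶜ : Finset (Fin ℓ)).card : ℝ) = (ℓ:ℝ) - (S.card : ℝ) := by
        have := Finset.card_add_card_compl S
        rw [Fintype.card_fin] at this
        have : (S.card : ℝ) + ((Sᶜ : Finset (Fin ℓ)).card : ℝ) = (ℓ:ℝ) := by exact_mod_cast this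
        linarith
      linarith
    have hSsum : ∑ j ∈ S, (α * (B j).card - β) = α * A - (S.card : ℝ) * β := by
      rw [Finset.sum_sub_distrib, Finset.sum_const, ← Finset.mul_sum, hA, nsmul_eq_mul]
    rw [hsplit, hSsum, hhk, hh]
    have hs1R : (1:ℝ) ≤ (S.card : ℝ) := by exact_mod_cast hs1
    have hsSR : (S.card : ℝ) ≤ (ℓ:ℝ) := by exact_mod_cast hsS
    have hαA : α * A ≤ α * ((k:ℝ) - (ℓ:ℝ) + (S.card : ℝ)) :=
      mul_le_mul_of_nonneg_left hAle hα0.le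
    rcases le_total (α * (ℓ:ℝ) - β) 0 with hc | hc
    · rw [max_eq_right hc]
      nlinarith [mul_nonneg (by linarith : (0:ℝ) ≤ (S.card : ℝ) - 1) hβ0.le,
        mul_nonneg hα0.le (by linarith : (0:ℝ) ≤ (ℓ:ℝ) - (S.card : ℝ))]
    · rw [max_eq_left hc]
      nlinarith [mul_nonneg (by linarith : (0:ℝ) ≤ (S.card : ℝ) - 1) (by linarith : (0:ℝ) ≤ β - α)]
end

section
/- Let G = (V, E) be a finite simple graph with all degrees d_v ≥ 1, let a > 0, λ ∈ (0, a], and μ, ν ≥ 0 with μ + ν ≥ 1. Fix α ∈ [1-μ, ν] and let x : V → ℕ. Define r(u,v) := λ/(a · d_u^μ · d_v^ν) for adjacent u, v. Then Σ_{v ∈ V} Σ_{u ∈ N(v)} x(u) · r(u,v) · d_v^α ≤ (λ/a) · Σ_{u ∈ V} x(u) · d_u^α. In particular the total weighted birth rate is at most the total weighted death rate Σ_u x(u) d_u^α. -/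
/-!
Swapping the double sum puts the rate of every edge with the vertex `u` that carries the
particles. Since `α ≤ ν`, each neighbour `v` contributes at most `d_u ^ (-μ)` per particle, so
the `d_u` neighbours together give at most `d_u ^ (1 - μ) ≤ d_u ^ α` per particle.
-/

open Finset

namespace SimpleGraph

variable {V : Type*} [Fintype V] (G : SimpleGraph V) [DecidableRel G.Adj]

theorem sum_sum_neighborFinset_comm {M : Type*} [AddCommMonoid M] (f : V → V → M) :
    ∑ v, ∑ u ∈ G.neighborFinset v, f u v = ∑ u, ∑ v ∈ G.neighborFinset u, f u v := by
  simp only [neighborFinset_eq_filter, sum_filter]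
  rw [sum_comm]
  simp only [G.adj_comm]

theorem sum_neighborFinset_rpow_div_le (hdeg : ∀ v, 1 ≤ G.degree v) {μ ν α : ℝ}
    (hα1 : 1 - μ ≤ α) (hα2 : α ≤ ν) (u : V) :
    ∑ v ∈ G.neighborFinset u,
        (G.degree v : ℝ) ^ α / ((G.degree u : ℝ) ^ μ * (G.degree v : ℝ) ^ ν)
      ≤ (G.degree u : ℝ) ^ α := by
  have hd : ∀ v, (1 : ℝ) ≤ G.degree v := fun v => Nat.one_le_cast.mpr (hdeg v)
  have hd0 : ∀ v, (0 : ℝ) < G.degree v := fun v => zero_lt_one.trans_le (hd v)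
  have hterm : ∀ v, (G.degree v : ℝ) ^ α / ((G.degree u : ℝ) ^ μ * (G.degree v : ℝ) ^ ν)
      ≤ 1 / (G.degree u : ℝ) ^ μ := fun v => by
    have hu := Real.rpow_pos_of_pos (hd0 u) μ
    have hv := Real.rpow_pos_of_pos (hd0 v) ν
    rw [div_le_div_iff₀ (mul_pos hu hv) hu, one_mul, mul_comm]
    exact mul_le_mul_of_nonneg_left (Real.rpow_le_rpow_of_exponent_le (hd v) hα2) hu.le
  calc _ ≤ ∑ _v ∈ G.neighborFinset u, 1 / (G.degree u : ℝ) ^ μ := sum_le_sum fun v _ => hterm v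
    _ = (G.degree u : ℝ) ^ (1 - μ) := by
      rw [sum_const, card_neighborFinset_eq_degree, nsmul_eq_mul, Real.rpow_sub (hd0 u),
        Real.rpow_one, mul_one_div]
    _ ≤ (G.degree u : ℝ) ^ α := Real.rpow_le_rpow_of_exponent_le (hd u) hα1

end SimpleGraph

theorem stmt2_general {V : Type*} [Fintype V] (G : SimpleGraph V)
    [DecidableRel G.Adj] (hdeg : ∀ v, 1 ≤ G.degree v)
    (a lam μ ν α : ℝ) (ha : 0 < a) (hlam0 : 0 < lam) (hlam : lam ≤ a)
    (hα1 : 1 - μ ≤ α) (hα2 : α ≤ ν)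
    (x : V → ℕ) :
    (∑ v, ∑ u ∈ G.neighborFinset v,
        (x u : ℝ) * (lam / (a * (G.degree u : ℝ) ^ μ * (G.degree v : ℝ) ^ ν))
          * (G.degree v : ℝ) ^ α)
      ≤ (lam / a) * ∑ u, (x u : ℝ) * (G.degree u : ℝ) ^ α ∧
    (∑ v, ∑ u ∈ G.neighborFinset v,
        (x u : ℝ) * (lam / (a * (G.degree u : ℝ) ^ μ * (G.degree v : ℝ) ^ ν))
          * (G.degree v : ℝ) ^ α)
      ≤ ∑ u, (x u : ℝ) * (G.degree u : ℝ) ^ α := by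
  set d : V → ℝ := fun v => (G.degree v : ℝ)
  have hbirth : (∑ v, ∑ u ∈ G.neighborFinset v, (x u : ℝ) * (lam / (a * d u ^ μ * d v ^ ν))
        * d v ^ α) ≤ (lam / a) * ∑ u, (x u : ℝ) * d u ^ α :=
    calc _ = ∑ u, lam / a * x u * ∑ v ∈ G.neighborFinset u, d v ^ α / (d u ^ μ * d v ^ ν) := by
          rw [G.sum_sum_neighborFinset_comm]
          refine sum_congr rfl fun u _ => ?_
          rw [mul_sum]
          refine sum_congr rfl fun v _ => ?_
          ring
      _ ≤ ∑ u, lam / a * x u * d u ^ α := by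
          gcongr with u
          exact G.sum_neighborFinset_rpow_div_le hdeg hα1 hα2 u
      _ = (lam / a) * ∑ u, (x u : ℝ) * d u ^ α := by
          rw [mul_sum]
          simp only [mul_assoc]
  refine ⟨hbirth, hbirth.trans ?_⟩
  have hdeath : 0 ≤ ∑ u, (x u : ℝ) * d u ^ α := by positivity
  exact mul_le_of_le_one_left hdeath ((div_le_one ha).mpr hlam)

theorem stmt2 {V : Type*} [Fintype V] [DecidableEq V] (G : SimpleGraph V)
    [DecidableRel G.Adj] (hdeg : ∀ v, 1 ≤ G.degree v)
    (a lam μ ν α : ℝ) (ha : 0 < a) (hlam0 : 0 < lam) (hlam : lam ≤ a)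
    (hμ : 0 ≤ μ) (hν : 0 ≤ ν) (hμν : 1 ≤ μ + ν)
    (hα1 : 1 - μ ≤ α) (hα2 : α ≤ ν)
    (x : V → ℕ) :
    (∑ v, ∑ u ∈ G.neighborFinset v,
        (x u : ℝ) * (lam / (a * (G.degree u : ℝ) ^ μ * (G.degree v : ℝ) ^ ν))
          * (G.degree v : ℝ) ^ α)
      ≤ (lam / a) * ∑ u, (x u : ℝ) * (G.degree u : ℝ) ^ α ∧
    (∑ v, ∑ u ∈ G.neighborFinset v,
        (x u : ℝ) * (lam / (a * (G.degree u : ℝ) ^ μ * (G.degree v : ℝ) ^ ν))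
          * (G.degree v : ℝ) ^ α)
      ≤ ∑ u, (x u : ℝ) * (G.degree u : ℝ) ^ α :=
  stmt2_general G hdeg a lam μ ν α ha hlam0 hlam hα1 hα2 x
end

section
/- Let T be a tree with root ∅ and no self-loops or parallel edges, and fix N, k ∈ ℕ. Let u_1, v_1, ..., u_k, v_k be (not necessarily distinct) vertices with dist_T(∅, u_i) ≤ dist_T(∅, v_i) ≤ dist_T(∅, u_i) + 1 for all i. Let T^{(k)} be the multigraph on the same vertex set obtained by adding the k edges {u_i, v_i}. Let B_N be the set of non-backtracking walks in T^{(k)} that start at ∅ and have length at most N, and let T_N be the set of vertices of T at distance at most N from ∅. Then |B_N| ≤ (2k+1)^N · |T_N|. -/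
/-!
Record each step of a walk by the oriented surplus edge it traverses, or by `none` for a tree
edge, and pad this word with `none` up to length `N`. Together with the endpoint, which lies in
`T_N` because every step changes the distance from the root by at most one, the word determines
a non-backtracking walk: up to its first surplus step such a walk stays in the tree, where a
non-backtracking walk is the unique path between its ends, and the rest is determined in the
same way.
-/

namespace List

variable {α : Type*}

def IsNonBacktracking (p : List α) : Prop := ∀ a b : α, [a, b, a] <:+: p → a = b

def nonBacktrackingWalks (R : α → α → Prop) (r : α) (N : ℕ) : Set (List α) :=
  {p | p.head? = some r ∧ p.length ≤ N + 1 ∧ p.IsChain R ∧ p.IsNonBacktracking}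

theorem IsNonBacktracking.infix {p q : List α} (hq : q.IsNonBacktracking) (h : p <:+: q) :
    p.IsNonBacktracking :=
  fun a b hab => hq a b (hab.trans h)

theorem nonBacktrackingWalks_mono {R R' : α → α → Prop} (h : ∀ x y, R x y → R' x y) (r : α)
    (N : ℕ) : nonBacktrackingWalks R r N ⊆ nonBacktrackingWalks R' r N :=
  fun _ ⟨hr, hN, hR, hnb⟩ => ⟨hr, hN, hR.imp h, hnb⟩

theorem exists_eq_append_of_not_isChain {R : α → α → Prop} :
    ∀ {l : List α}, ¬IsChain R l →
      ∃ s x y t, l = s ++ x :: y :: t ∧ IsChain R (s ++ [x]) ∧ ¬R x y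
  | [], h | [_], h => absurd (by simp) h
  | a :: b :: l, h => by
    by_cases hab : R a b
    · obtain ⟨s, x, y, t, hl, hs, hxy⟩ :=
        exists_eq_append_of_not_isChain fun hl => h (isChain_cons_cons.2 ⟨hab, hl⟩)
      refine ⟨a :: s, x, y, t, by rw [hl, cons_append], ?_, hxy⟩
      rw [cons_append, isChain_cons]
      refine ⟨fun c hc => ?_, hs⟩
      rcases s with _ | ⟨d, s⟩ <;> simp_all
    · exact ⟨[], a, b, l, rfl, isChain_singleton a, hab⟩

theorem IsChain.apply_getLastD_le {R : α → α → Prop} {f : α → ℕ}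
    (hf : ∀ x y, R x y → f y ≤ f x + 1) :
    ∀ {x : α} {l : List α}, IsChain R (x :: l) → f (l.getLastD x) ≤ f x + l.length
  | _, [], _ => by simp
  | x, y :: l, h => by
    have hxy := hf _ _ (isChain_cons_cons.1 h).1
    have hl := IsChain.apply_getLastD_le hf (isChain_cons_cons.1 h).2
    rw [getLastD_cons, length_cons]
    omega

theorem replicate_none_append_some_inj {m n : ℕ} {a b : α} {r r' : List (Option α)}
    (h : replicate m none ++ some a :: r = replicate n none ++ some b :: r') :
    m = n ∧ a = b ∧ r = r' := by
  induction m generalizing n with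
  | zero => cases n <;> simp_all [replicate_succ]
  | succ m ih =>
    cases n with
    | zero => simp [replicate_succ] at h
    | succ n => simpa using ih (by simpa [replicate_succ] using h)

theorem finite_setOf_length_eq [Finite α] (n : ℕ) : {l : List α | l.length = n}.Finite :=
  @Set.toFinite _ _ (inferInstanceAs (Finite (List.Vector α n)))

theorem ncard_setOf_length_eq [Fintype α] (n : ℕ) :
    {l : List α | l.length = n}.ncard = Fintype.card α ^ n := by
  rw [← Nat.card_coe_set_eq, ← card_vector n, ← Nat.card_eq_fintype_card]
  rfl

end List

namespace SimpleGraph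

open List (replicate isChain_cons_cons isChain_append_cons_cons)

variable {V : Type*} {G : SimpleGraph V}

theorem exists_walk_support_eq : ∀ {x : V} {l : List V}, List.IsChain G.Adj (x :: l) →
    ∃ w : G.Walk x (l.getLastD x), w.support = x :: l
  | _, [], _ => ⟨.nil, rfl⟩
  | x, y :: l, h => by
    obtain ⟨w, hw⟩ := exists_walk_support_eq (isChain_cons_cons.1 h).2
    exact ⟨.cons (isChain_cons_cons.1 h).1 (w.copy rfl List.getLastD_cons.symm), by simp [hw]⟩

theorem IsAcyclic.isPath_of_isNonBacktracking (hG : G.IsAcyclic) :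
    ∀ {x z : V} (w : G.Walk x z), w.support.IsNonBacktracking → w.IsPath
  | _, _, .nil, _ => .nil
  | x, _, .cons (v := b) hxb w, hnb => by
    classical
    have hw : w.IsPath :=
      hG.isPath_of_isNonBacktracking w (hnb.infix (List.suffix_cons x _).isInfix)
    refine hw.cons fun hx => hxb.ne (hnb x b ?_)
    -- in a tree the edge is the only path from `b` to `x`, so `w` starts with it
    have hedge : w.takeUntil x hx = .cons hxb.symm .nil :=
      congrArg Subtype.val <|
        (hG.subsingleton_path b x).elim ⟨_, hw.takeUntil hx⟩
          ⟨.cons hxb.symm .nil, by simp [hxb.ne']⟩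
    have hsupp : w.support = b :: x :: (w.dropUntil x hx).support.tail := by
      conv_lhs => rw [← w.take_spec hx, hedge]
      simp
    rw [Walk.support_cons, hsupp]
    exact ⟨[], _, rfl⟩

theorem IsAcyclic.eq_of_isChain_of_isNonBacktracking (hG : G.IsAcyclic) {p q : List V}
    (hp : List.IsChain G.Adj p) (hq : List.IsChain G.Adj q)
    (hpnb : p.IsNonBacktracking) (hqnb : q.IsNonBacktracking)
    (hhead : p.head? = q.head?) (hlast : p.getLast? = q.getLast?) : p = q := by
  rcases p with _ | ⟨x, l⟩ <;> rcases q with _ | ⟨y, l'⟩ <;>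
    simp only [List.head?_cons, List.head?_nil, reduceCtorEq, Option.some.injEq] at hhead ⊢
  subst hhead
  obtain ⟨w, hw⟩ := exists_walk_support_eq hp
  obtain ⟨w', hw'⟩ := exists_walk_support_eq hq
  have hz : l'.getLastD x = l.getLastD x := by simpa [List.getLast?_cons] using hlast.symm
  have := (hG.subsingleton_path _ _).elim ⟨w, hG.isPath_of_isNonBacktracking w (hw ▸ hpnb)⟩
    ⟨w'.copy rfl hz, hG.isPath_of_isNonBacktracking _ (by simpa [hw'] using hqnb)⟩
  simpa [hw, hw'] using congrArg (fun w => w.1.support) this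

section SurplusEdges

variable (G) {L : Type*} (e : L → V × V)

-- Adjacency in `G` with the oriented edges `e l` added: the paper's multigraph `T^{(k)}`.
def AugAdj (x y : V) : Prop := G.Adj x y ∨ ∃ l, e l = (x, y)

-- `none` is the paper's symbol `o`: a step along a tree edge carries no label.
open Classical in
noncomputable def surplusLabel (x y : V) : Option L :=
  if h : ¬G.Adj x y ∧ ∃ l, e l = (x, y) then some h.2.choose else none

noncomputable def surplusLabels : List V → List (Option L)
  | x :: y :: l => G.surplusLabel e x y :: surplusLabels (y :: l)
  | _ => []

noncomputable def surplusCode (r : V) (N : ℕ) (p : List V) : List (Option L) × V :=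
  (G.surplusLabels e p ++ replicate (N - (p.length - 1)) none, p.getLastD r)

variable {G e}

theorem surplusLabel_of_adj {x y : V} (h : G.Adj x y) : G.surplusLabel e x y = none :=
  dif_neg fun h' => h'.1 h

theorem exists_surplusLabel_eq_some {x y : V} (hxy : G.AugAdj e x y) (h : ¬G.Adj x y) :
    ∃ l, G.surplusLabel e x y = some l ∧ e l = (x, y) := by
  have hl : ¬G.Adj x y ∧ ∃ l, e l = (x, y) := ⟨h, hxy.resolve_left h⟩
  exact ⟨_, dif_pos hl, hl.2.choose_spec⟩

theorem length_surplusLabels : ∀ p : List V, (G.surplusLabels e p).length = p.length - 1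
  | [] | [_] => rfl
  | _ :: y :: l => by simp [surplusLabels, length_surplusLabels (y :: l)]

theorem surplusLabels_append_cons (s : List V) (x : V) (r : List V) :
    G.surplusLabels e (s ++ x :: r) = G.surplusLabels e (s ++ [x]) ++ G.surplusLabels e (x :: r) :=
  match s with
  | [] | [_] => by simp [surplusLabels]
  | a :: b :: s => by
    simp only [List.cons_append, surplusLabels]
    rw [← List.cons_append, surplusLabels_append_cons (b :: s)]
    rfl

theorem surplusLabels_of_isChain : ∀ {p : List V}, List.IsChain G.Adj p →
    G.surplusLabels e p = replicate (p.length - 1) none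
  | [], _ | [_], _ => rfl
  | x :: y :: l, h => by
    rw [surplusLabels, surplusLabel_of_adj (isChain_cons_cons.1 h).1,
      surplusLabels_of_isChain (isChain_cons_cons.1 h).2]
    simp [List.replicate_succ]

theorem exists_eq_append_of_not_isChain_adj {p : List V} (hp : List.IsChain (G.AugAdj e) p)
    (h : ¬List.IsChain G.Adj p) :
    ∃ s x y t l, p = s ++ x :: y :: t ∧ List.IsChain G.Adj (s ++ [x]) ∧ e l = (x, y) ∧
      G.surplusLabels e p = replicate s.length none ++ some l :: G.surplusLabels e (y :: t) := by
  obtain ⟨s, x, y, t, rfl, hs, hxy⟩ := List.exists_eq_append_of_not_isChain h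
  obtain ⟨l, hl, hel⟩ := exists_surplusLabel_eq_some (isChain_append_cons_cons.1 hp).2.1 hxy
  refine ⟨s, x, y, t, l, rfl, hs, hel, ?_⟩
  rw [surplusLabels_append_cons, surplusLabels_of_isChain hs, surplusLabels, hl]
  simp

theorem IsAcyclic.eq_of_surplusLabels_append_replicate (hG : G.IsAcyclic) {p q : List V}
    {m n : ℕ} (hp : List.IsChain (G.AugAdj e) p) (hq : List.IsChain (G.AugAdj e) q)
    (hpnb : p.IsNonBacktracking) (hqnb : q.IsNonBacktracking)
    (hhead : p.head? = q.head?) (hlast : p.getLast? = q.getLast?)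
    (hlab : G.surplusLabels e p ++ replicate m none = G.surplusLabels e q ++ replicate n none) :
    p = q := by
  induction hlen : p.length using Nat.strong_induction_on generalizing p q with
  | _ len ih =>
    by_cases htp : List.IsChain G.Adj p <;> by_cases htq : List.IsChain G.Adj q
    · exact hG.eq_of_isChain_of_isNonBacktracking htp htq hpnb hqnb hhead hlast
    · obtain ⟨_, _, _, _, l, rfl, -, -, hl⟩ := exists_eq_append_of_not_isChain_adj hq htq
      have : some l ∈ G.surplusLabels e p ++ replicate m none := by simp [hlab, hl]
      simp [surplusLabels_of_isChain htp] at this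
    · obtain ⟨_, _, _, _, l, rfl, -, -, hl⟩ := exists_eq_append_of_not_isChain_adj hp htp
      have : some l ∈ G.surplusLabels e q ++ replicate n none := by simp [← hlab, hl]
      simp [surplusLabels_of_isChain htq] at this
    obtain ⟨s, x, y, t, l, rfl, hs, hel, hl⟩ := exists_eq_append_of_not_isChain_adj hp htp
    obtain ⟨s', x', y', t', l', rfl, hs', hel', hl'⟩ := exists_eq_append_of_not_isChain_adj hq htq
    -- both walks leave the tree at the same step, along the same surplus edge
    rw [hl, hl', List.append_assoc, List.append_assoc, List.cons_append, List.cons_append] at hlab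
    obtain ⟨-, rfl, hrest⟩ := List.replicate_none_append_some_inj hlab
    obtain ⟨rfl, rfl⟩ : x = x' ∧ y = y' := by simpa [hel] using hel'
    have hprefix : s ++ [x] = s' ++ [x] :=
      hG.eq_of_isChain_of_isNonBacktracking hs hs'
        (hpnb.infix ⟨[], y :: t, by simp⟩) (hqnb.infix ⟨[], y :: t', by simp⟩)
        (by simpa using hhead) (by simp)
    have htail : y :: t = y :: t' :=
      ih _ (by simp [← hlen]; omega) (isChain_append_cons_cons.1 hp).2.2
        (isChain_append_cons_cons.1 hq).2.2 (hpnb.infix ⟨s ++ [x], [], by simp⟩)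
        (hqnb.infix ⟨s' ++ [x], [], by simp⟩) rfl
        (by simpa only [List.getLast?_append_cons, List.getLast?_cons_cons] using hlast) hrest rfl
    rw [List.append_cancel_right hprefix, htail]

theorem IsAcyclic.injOn_surplusCode (hG : G.IsAcyclic) (r : V) (N : ℕ) :
    Set.InjOn (G.surplusCode e r N) (List.nonBacktrackingWalks (G.AugAdj e) r N) := by
  rintro p ⟨hp, -, hpc, hpnb⟩ q ⟨hq, -, hqc, hqnb⟩ hpq
  obtain ⟨hlab, hlast⟩ := Prod.ext_iff.1 hpq
  refine hG.eq_of_surplusLabels_append_replicate hpc hqc hpnb hqnb (hp.trans hq.symm) ?_ hlab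
  obtain ⟨l, rfl⟩ := List.head?_eq_some_iff.1 hp
  obtain ⟨l', rfl⟩ := List.head?_eq_some_iff.1 hq
  simpa [List.getLast?_cons, surplusCode] using hlast

theorem Connected.dist_le_add_one_of_augAdj (hG : G.Connected) {r : V}
    (he : ∀ l, G.dist r (e l).2 ≤ G.dist r (e l).1 + 1) {x y : V} (hxy : G.AugAdj e x y) :
    G.dist r y ≤ G.dist r x + 1 := by
  rcases hxy with h | ⟨l, hl⟩
  · simpa [dist_eq_one_iff_adj.2 h] using hG.dist_triangle (u := r) (v := x) (w := y)
  · simpa [hl] using he l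

theorem Connected.mapsTo_surplusCode (hG : G.Connected) {r : V}
    (he : ∀ l, G.dist r (e l).2 ≤ G.dist r (e l).1 + 1) (N : ℕ) :
    Set.MapsTo (G.surplusCode e r N) (List.nonBacktrackingWalks (G.AugAdj e) r N)
      ({l | l.length = N} ×ˢ {w | G.dist r w ≤ N}) := by
  rintro p ⟨hhead, hlen, hchain, -⟩
  obtain ⟨l, rfl⟩ := List.head?_eq_some_iff.1 hhead
  have hend := hchain.apply_getLastD_le fun _ _ h => hG.dist_le_add_one_of_augAdj he h
  rw [dist_self] at hend
  simp only [List.length_cons] at hlen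
  constructor
  · simp only [surplusCode, Set.mem_ofPred_eq, List.length_append, List.length_replicate,
      length_surplusLabels, List.length_cons]
    omega
  · simp only [surplusCode, Set.mem_ofPred_eq, List.getLastD_cons]
    omega

theorem IsTree.ncard_nonBacktrackingWalks_le [Finite V] [Fintype L] (hG : G.IsTree) (r : V)
    (he : ∀ l, G.dist r (e l).2 ≤ G.dist r (e l).1 + 1) (N : ℕ) :
    (List.nonBacktrackingWalks (G.AugAdj e) r N).Finite ∧
      (List.nonBacktrackingWalks (G.AugAdj e) r N).ncard ≤
        (Fintype.card L + 1) ^ N * {w | G.dist r w ≤ N}.ncard := by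
  have hmaps := hG.connected.mapsTo_surplusCode he N
  have hinj := hG.isAcyclic.injOn_surplusCode (e := e) r N
  have hfin := (List.finite_setOf_length_eq (α := Option L) N).prod
    (Set.toFinite {w | G.dist r w ≤ N})
  refine ⟨hfin.of_injOn hmaps hinj, ?_⟩
  calc _ ≤ _ := Set.ncard_le_ncard_of_injOn _ hmaps hinj hfin
    _ = _ := by rw [Set.ncard_prod, List.ncard_setOf_length_eq, Fintype.card_option]

end SurplusEdges

end SimpleGraph

theorem stmt6_general {V : Type*} [Fintype V] (T : SimpleGraph V)
    (hT : T.IsTree) (root : V) (N k : ℕ)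
    (u v : Fin k → V)
    (hdist : ∀ i, T.dist root (u i) ≤ T.dist root (v i) ∧
      T.dist root (v i) ≤ T.dist root (u i) + 1)
    (Adj' : V → V → Prop)
    (hAdj' : ∀ x y, Adj' x y ↔
      T.Adj x y ∨ ∃ i, (x = u i ∧ y = v i) ∨ (x = v i ∧ y = u i))
    (B : Set (List V))
    (hB : B = {p : List V | p.head? = some root ∧ p.length ≤ N + 1 ∧
      List.Chain' Adj' p ∧
      (∀ a b : V, [a, b, a] <:+: p → a = b)}) :
    B.Finite ∧ B.ncard ≤ (2 * k + 1) ^ N * Set.ncard {w : V | T.dist root w ≤ N} := by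
  let e : Fin k × Bool → V × V := fun ib => bif ib.2 then (u ib.1, v ib.1) else (v ib.1, u ib.1)
  have he : ∀ l, T.dist root (e l).2 ≤ T.dist root (e l).1 + 1 := by
    rintro ⟨i, _ | _⟩
    exacts [(hdist i).1.trans (Nat.le_succ _), (hdist i).2]
  have hsub : B ⊆ List.nonBacktrackingWalks (T.AugAdj e) root N := by
    refine hB ▸ List.nonBacktrackingWalks_mono (fun x y hxy => ?_) root N
    rcases (hAdj' x y).1 hxy with h | ⟨i, ⟨rfl, rfl⟩ | ⟨rfl, rfl⟩⟩
    exacts [.inl h, .inr ⟨(i, true), rfl⟩, .inr ⟨(i, false), rfl⟩]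
  obtain ⟨hfin, hcard⟩ := hT.ncard_nonBacktrackingWalks_le root he N
  have hL : Fintype.card (Fin k × Bool) = 2 * k := by simp [mul_comm]
  exact ⟨hfin.subset hsub, hL ▸ (Set.ncard_le_ncard hsub hfin).trans hcard⟩

theorem stmt6 {V : Type*} [Fintype V] [DecidableEq V] (T : SimpleGraph V)
    (hT : T.IsTree) (root : V) (N k : ℕ)
    (u v : Fin k → V)
    (hdist : ∀ i, T.dist root (u i) ≤ T.dist root (v i) ∧
      T.dist root (v i) ≤ T.dist root (u i) + 1)
    (Adj' : V → V → Prop)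
    (hAdj' : ∀ x y, Adj' x y ↔
      T.Adj x y ∨ ∃ i, (x = u i ∧ y = v i) ∨ (x = v i ∧ y = u i))
    (B : Set (List V))
    (hB : B = {p : List V | p.head? = some root ∧ p.length ≤ N + 1 ∧
      List.Chain' Adj' p ∧
      (∀ a b : V, [a, b, a] <:+: p → a = b)}) :
    B.Finite ∧ B.ncard ≤ (2 * k + 1) ^ N * Set.ncard {w : V | T.dist root w ≤ N} :=
  stmt6_general T hT root N k u v hdist Adj' hAdj' B hB
end
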